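/- arXiv:0909.3208 — 2 statements merged into one kernel-verified Lean document; each statement's English description precedes it below -/
import Mathlib

section
/- In a dual net, the relation on points defined by 'noncollinear or equal' (parallelism) is an equivalence relation. -/
/-!
If `x ∥ y ∥ z` and `x ≠ z` lay on a common line `B`, then `y` would not be on `B` (it is not
collinear with `x`), so `x` and `z` would be two points of `B` not collinear with `y`,
contradicting the uniqueness in the dual net axiom.
-/

namespace DualNet

variable {P L : Type*} (inc : P → L → Prop)

def Collinear (x y : P) : Prop := ∃ l, inc x l ∧ inc y l

def Parallel (x y : P) : Prop := x = y ∨ ¬ Collinear inc x y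

variable {inc}

theorem Collinear.symm {x y : P} : Collinear inc x y → Collinear inc y x :=
  fun ⟨l, hx, hy⟩ => ⟨l, hy, hx⟩

theorem Parallel.symm {x y : P} : Parallel inc x y → Parallel inc y x
  | .inl h => .inl h.symm
  | .inr h => .inr fun hyx => h hyx.symm

theorem eq_of_not_collinear_of_inc
    (hnet : ∀ (z : P) (B : L), ¬ inc z B → ∃! z' : P, inc z' B ∧ ¬ Collinear inc z z')
    {x y z : P} {B : L} (hxB : inc x B) (hzB : inc z B)
    (hxy : ¬ Collinear inc x y) (hyz : ¬ Collinear inc y z) : x = z := by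
  have hyB : ¬ inc y B := fun hyB => hxy ⟨B, hxB, hyB⟩
  exact (hnet y B hyB).unique ⟨hxB, fun hyx => hxy hyx.symm⟩ ⟨hzB, hyz⟩

theorem Parallel.trans
    (hnet : ∀ (z : P) (B : L), ¬ inc z B → ∃! z' : P, inc z' B ∧ ¬ Collinear inc z z')
    {x y z : P} (hxy : Parallel inc x y) (hyz : Parallel inc y z) : Parallel inc x z := by
  rcases hxy with rfl | hxy
  · exact hyz
  rcases hyz with rfl | hyz
  · exact .inr hxy
  refine or_iff_not_imp_left.mpr fun hxz => ?_
  rintro ⟨B, hxB, hzB⟩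
  exact hxz (eq_of_not_collinear_of_inc hnet hxB hzB hxy hyz)

theorem parallel_equivalence
    (hnet : ∀ (z : P) (B : L), ¬ inc z B → ∃! z' : P, inc z' B ∧ ¬ Collinear inc z z') :
    Equivalence (Parallel inc) :=
  ⟨fun _ => .inl rfl, Parallel.symm, Parallel.trans hnet⟩

end DualNet

theorem dual_net_parallel_equivalence_general
    {P L : Type} (inc : P → L → Prop)
    -- for every point z and line B not through z, there is a unique point z'
    -- on B not collinear with z
    (hnet : ∀ (z : P) (B : L), ¬ inc z B →
      ∃! z' : P, inc z' B ∧ ¬ ∃ l : L, inc z l ∧ inc z' l) :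
    Equivalence (fun x y : P => x = y ∨ ¬ ∃ l : L, inc x l ∧ inc y l) :=
  DualNet.parallel_equivalence hnet

/-- In a dual net, the relation on points defined by
"noncollinear or equal" (parallelism) is an equivalence relation. -/
theorem dual_net_parallel_equivalence
    {P L : Type} (inc : P → L → Prop)
    -- two distinct points are incident with at most one common line
    (huniq : ∀ ⦃x y : P⦄ ⦃l m : L⦄, inc x l → inc y l → inc x m → inc y m →
      x = y ∨ l = m)
    -- for every point z and line B not through z, there is a unique point z'
    -- on B not collinear with z
    (hnet : ∀ (z : P) (B : L), ¬ inc z B →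
      ∃! z' : P, inc z' B ∧ ¬ ∃ l : L, inc z l ∧ inc z' l) :
    Equivalence (fun x y : P => x = y ∨ ¬ ∃ l : L, inc x l ∧ inc y l) :=
  dual_net_parallel_equivalence_general inc hnet
end

section
/- In a thick generalized quadrangle, a regular point x is projective if and only if every triad of points containing x has a center. -/
/-- A (thick) generalized quadrangle. -/
structure GenQuadrangle where
  P : Type
  Ln : Type
  inc : P → Ln → Prop
  /-- (PL): no pair of distinct points is incident with a pair of distinct lines -/
  pl : ∀ ⦃x y : P⦄ ⦃l m : Ln⦄, inc x l → inc y l → inc x m → inc y m → x = y ∨ l = m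
  /-- thickness: every point is incident with at least three lines -/
  thickPt : ∀ x : P, ∃ l₁ l₂ l₃ : Ln, l₁ ≠ l₂ ∧ l₁ ≠ l₃ ∧ l₂ ≠ l₃ ∧
    inc x l₁ ∧ inc x l₂ ∧ inc x l₃
  /-- thickness: every line is incident with at least three points -/
  thickLn : ∀ l : Ln, ∃ x₁ x₂ x₃ : P, x₁ ≠ x₂ ∧ x₁ ≠ x₃ ∧ x₂ ≠ x₃ ∧
    inc x₁ l ∧ inc x₂ l ∧ inc x₃ l
  /-- (GQ): for every non-incident point-line pair (x,l) there are a unique point y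
  and a unique line m with x I m I y I l -/
  gq : ∀ (x : P) (l : Ln), ¬ inc x l → ∃! q : P × Ln, inc x q.2 ∧ inc q.1 q.2 ∧ inc q.1 l

namespace GenQuadrangle

variable (G : GenQuadrangle)

/-- Two points are collinear if some line is incident with both. -/
def collinear (x y : G.P) : Prop := ∃ l : G.Ln, G.inc x l ∧ G.inc y l

/-- Two points are opposite if they are not collinear. -/
def opp (x y : G.P) : Prop := ¬ G.collinear x y

/-- The perp {x,y}^⊥ of a pair of points. -/
def perp (x y : G.P) : Set G.P := {z | G.collinear z x ∧ G.collinear z y}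

/-- X^⊥ for a set of points X. -/
def perpSet (S : Set G.P) : Set G.P := {z | ∀ u ∈ S, G.collinear z u}

/-- The span {x,y}^⊥⊥ of a pair of points. -/
def span (x y : G.P) : Set G.P := G.perpSet (G.perp x y)

/-- A point x is regular if every span {x,y}^⊥⊥ (y opposite x) is a perp of a pair
of opposite points. -/
def regular (x : G.P) : Prop :=
  ∀ y : G.P, G.opp x y → ∃ u v : G.P, G.opp u v ∧ G.span x y = G.perp u v

/-- A point x is projective if it is regular and every pair of distinct perps
through x meets in a unique point (i.e. the dual net Γ*_x is a dual affine plane). -/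
def projective (x : G.P) : Prop :=
  G.regular x ∧ ∀ y z : G.P, G.opp x y → G.opp x z → G.perp x y ≠ G.perp x z →
    ∃! w : G.P, w ∈ G.perp x y ∧ w ∈ G.perp x z

/-- A triad: three pairwise opposite points. -/
def triad (x y z : G.P) : Prop := G.opp x y ∧ G.opp y z ∧ G.opp x z

/-- A center of a triad: a point collinear with all three. -/
def center (w x y z : G.P) : Prop := G.collinear w x ∧ G.collinear w y ∧ G.collinear w z

end GenQuadrangle

/-!
Projectivity asks, beyond regularity, that two distinct perps `{x,y}^⊥ ≠ {x,z}^⊥` meet in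
exactly one point. A common point is a center of the triad `(x,y,z)`, or, when `y ~ z`, the
projection of `x` onto the line `yz`; conversely a common point is a center. Uniqueness is
where regularity enters: if `{x,y}^⊥⊥ = {u,v}^⊥`, then `{x,y}^⊥⊥ = {w₁,w₂}^⊥` for any two
distinct `w₁, w₂ ∈ {x,y}^⊥`, so two common points of both perps force `z ∈ {x,y}^⊥⊥`, whence
`{x,z}^⊥ = {x,y}^⊥`.
-/

namespace GenQuadrangle

variable {G : GenQuadrangle} {u v w x y z : G.P}

lemma collinear_refl (x : G.P) : G.collinear x x := by
  obtain ⟨l, -, -, -, -, -, hl, -, -⟩ := G.thickPt x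
  exact ⟨l, hl, hl⟩

lemma collinear.symm (h : G.collinear x y) : G.collinear y x := by
  obtain ⟨l, hx, hy⟩ := h
  exact ⟨l, hy, hx⟩

lemma opp.ne (h : G.opp x y) : x ≠ y := by
  rintro rfl
  exact h (collinear_refl x)

lemma foot_unique {l : G.Ln} (hz : ¬ G.inc z l) {a b : G.P} (ha : G.inc a l) (hb : G.inc b l)
    (hza : G.collinear z a) (hzb : G.collinear z b) : a = b := by
  obtain ⟨ma, hzma, hama⟩ := hza
  obtain ⟨mb, hzmb, hbmb⟩ := hzb
  obtain ⟨_, -, huniq⟩ := G.gq z l hz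
  exact congrArg Prod.fst ((huniq (a, ma) ⟨hzma, hama, ha⟩).trans
    (huniq (b, mb) ⟨hzmb, hbmb, hb⟩).symm)

lemma exists_foot {l : G.Ln} (hz : ¬ G.inc z l) : ∃ p, G.inc p l ∧ G.collinear z p := by
  obtain ⟨q, ⟨h₁, h₂, h₃⟩, -⟩ := G.gq z l hz
  exact ⟨q.1, h₃, q.2, h₁, h₂⟩

lemma perp_pairwise_opp (hxy : G.opp x y) : (G.perp x y).Pairwise G.opp := by
  intro p hp q hq hne ⟨m, hpm, hqm⟩
  by_cases hxm : G.inc x m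
  · have hym : ¬ G.inc y m := fun hym => hxy ⟨m, hxm, hym⟩
    exact hne (foot_unique hym hpm hqm hp.2.symm hq.2.symm)
  · exact hne (foot_unique hxm hpm hqm hp.1.symm hq.1.symm)

lemma eq_of_collinear_of_mem_perp (hxy : G.opp x y) {p q : G.P} (hp : p ∈ G.perp x y)
    (hq : q ∈ G.perp x y) (hpq : G.collinear p q) : p = q :=
  by_contra fun hne => perp_pairwise_opp hxy hp hq hne hpq

lemma perp_nontrivial (hxy : G.opp x y) : (G.perp x y).Nontrivial := by
  obtain ⟨l₁, l₂, -, hl, -, -, hx₁, hx₂, -⟩ := G.thickPt x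
  have hy₁ : ¬ G.inc y l₁ := fun h => hxy ⟨l₁, hx₁, h⟩
  have hy₂ : ¬ G.inc y l₂ := fun h => hxy ⟨l₂, hx₂, h⟩
  obtain ⟨f₁, hf₁, hyf₁⟩ := exists_foot hy₁
  obtain ⟨f₂, hf₂, hyf₂⟩ := exists_foot hy₂
  refine ⟨f₁, ⟨⟨l₁, hf₁, hx₁⟩, hyf₁.symm⟩, f₂, ⟨⟨l₂, hf₂, hx₂⟩, hyf₂.symm⟩, ?_⟩
  rintro rfl
  have hfx : f₁ ≠ x := fun h => hxy (h ▸ hyf₁).symm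
  exact (G.pl hf₁ hx₁ hf₂ hx₂).elim hfx hl

lemma perp_eq_of_subset (hxy : G.opp x y) (hxz : G.opp x z) (h : G.perp x y ⊆ G.perp x z) :
    G.perp x y = G.perp x z := by
  refine h.antisymm fun k hk => ?_
  obtain ⟨l, hkl, hxl⟩ := hk.1
  obtain ⟨f, hfl, hyf⟩ := exists_foot fun hyl => hxy ⟨l, hxl, hyl⟩
  have hf : f ∈ G.perp x y := ⟨⟨l, hfl, hxl⟩, hyf.symm⟩
  have hzl : ¬ G.inc z l := fun hzl => hxz ⟨l, hxl, hzl⟩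
  exact foot_unique hzl hfl hkl (h hf).2.symm hk.2.symm ▸ hf

lemma mem_span_left : x ∈ G.span x y := fun _ hk => hk.1.symm

lemma mem_span_right : y ∈ G.span x y := fun _ hk => hk.2.symm

lemma perp_eq_of_mem_span (hxy : G.opp x y) (hs : z ∈ G.span x y) (hzx : z ≠ x) :
    G.perp x y = G.perp x z := by
  obtain ⟨k₁, hk₁, k₂, hk₂, hk⟩ := perp_nontrivial hxy
  have hxz : G.opp x z :=
    perp_pairwise_opp (perp_pairwise_opp hxy hk₁ hk₂ hk) ⟨hk₁.1.symm, hk₂.1.symm⟩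
      ⟨hs k₁ hk₁, hs k₂ hk₂⟩ hzx.symm
  exact perp_eq_of_subset hxy hxz fun k hk => ⟨hk.1, (hs k hk).symm⟩

lemma exists_mem_perp_collinear (huw : G.opp u w) (hzw : G.collinear z w) :
    ∃ p ∈ G.perp u w, G.collinear z p := by
  obtain ⟨l, hzl, hwl⟩ := hzw
  obtain ⟨p, hpl, hup⟩ := exists_foot fun hul => huw ⟨l, hul, hwl⟩
  exact ⟨p, ⟨hup.symm, l, hpl, hwl⟩, l, hzl, hpl⟩

lemma mem_perp_of_span_eq_perp (hspan : G.span x y = G.perp u v) : u ∈ G.perp x y := by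
  have hx : x ∈ G.perp u v := hspan ▸ mem_span_left
  have hy : y ∈ G.perp u v := hspan ▸ mem_span_right
  exact ⟨hx.1.symm, hy.1.symm⟩

lemma span_eq_perp_of_mem_perp (huv : G.opp u v) (hspan : G.span x y = G.perp u v)
    (huw : G.opp u w) (hw : w ∈ G.perp x y) : G.span x y = G.perp u w := by
  rw [hspan]
  refine perp_eq_of_subset huv huw fun p hp => ⟨hp.1, ?_⟩
  exact (show p ∈ G.span x y from hspan ▸ hp) w hw

lemma mem_span_of_mem_perp (hx : G.regular x) (hxy : G.opp x y) {w₁ w₂ : G.P}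
    (hw₁ : w₁ ∈ G.perp x y) (hw₂ : w₂ ∈ G.perp x y) (hw : w₁ ≠ w₂) (hz : z ∈ G.perp w₁ w₂) :
    z ∈ G.span x y := by
  obtain ⟨u, v, huv, hspan⟩ := hx y hxy
  obtain ⟨w, hwxy, hwu, hzw⟩ : ∃ w ∈ G.perp x y, w ≠ u ∧ G.collinear z w := by
    by_cases h : w₁ = u
    · exact ⟨w₂, hw₂, h ▸ hw.symm, hz.2⟩
    · exact ⟨w₁, hw₁, h, hz.1⟩
  have huw : G.opp u w :=
    perp_pairwise_opp hxy (mem_perp_of_span_eq_perp hspan) hwxy hwu.symm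
  -- `z` and `p` are collinear points of `{w₁,w₂}^⊥ ⊇ {x,y}^⊥⊥ = {u,w}^⊥`, hence equal.
  obtain ⟨p, hp, hzp⟩ := exists_mem_perp_collinear huw hzw
  rw [← span_eq_perp_of_mem_perp huv hspan huw hwxy] at hp
  have hw₁₂ : G.opp w₁ w₂ := perp_pairwise_opp hxy hw₁ hw₂ hw
  exact eq_of_collinear_of_mem_perp hw₁₂ hz ⟨hp w₁ hw₁, hp w₂ hw₂⟩ hzp ▸ hp

lemma perp_eq_of_two_mem_perp_inter (hx : G.regular x) (hxy : G.opp x y) (hxz : G.opp x z)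
    {w₁ w₂ : G.P} (hw₁ : w₁ ∈ G.perp x y ∩ G.perp x z) (hw₂ : w₂ ∈ G.perp x y ∩ G.perp x z)
    (hw : w₁ ≠ w₂) : G.perp x y = G.perp x z :=
  perp_eq_of_mem_span hxy
    (mem_span_of_mem_perp hx hxy hw₁.1 hw₂.1 hw ⟨hw₁.2.2.symm, hw₂.2.2.symm⟩) hxz.ne.symm

lemma exists_mem_perp_inter
    (hcentric : ∀ y z : G.P, G.triad x y z → ∃ w : G.P, G.center w x y z)
    (hxy : G.opp x y) (hxz : G.opp x z) : (G.perp x y ∩ G.perp x z).Nonempty := by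
  by_cases hyz : G.collinear y z
  · obtain ⟨l, hyl, hzl⟩ := hyz
    obtain ⟨f, hfl, hxf⟩ := exists_foot fun hxl => hxy ⟨l, hxl, hyl⟩
    exact ⟨f, ⟨hxf.symm, l, hfl, hyl⟩, hxf.symm, l, hfl, hzl⟩
  · obtain ⟨w, hwx, hwy, hwz⟩ := hcentric y z ⟨hxy, hyz, hxz⟩
    exact ⟨w, ⟨hwx, hwy⟩, hwx, hwz⟩

end GenQuadrangle

/-- In a thick generalized quadrangle, a regular point x is projective
if and only if every triad of points containing x has a center. -/
theorem regular_point_projective_iff_every_triad_centric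
    (G : GenQuadrangle) (x : G.P) (hx : G.regular x) :
    G.projective x ↔ ∀ y z : G.P, G.triad x y z → ∃ w : G.P, G.center w x y z := by
  constructor
  · rintro ⟨-, hmeet⟩ y z ⟨hxy, -, hxz⟩
    obtain ⟨w, hwy, hwz⟩ : (G.perp x y ∩ G.perp x z).Nonempty := by
      by_cases hyz : G.perp x y = G.perp x z
      · obtain ⟨w, hw, -⟩ := GenQuadrangle.perp_nontrivial hxy
        exact ⟨w, hw, hyz ▸ hw⟩
      · exact (hmeet y z hxy hxz hyz).exists
    exact ⟨w, hwy.1, hwy.2, hwz.2⟩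
  · intro hcentric
    refine ⟨hx, fun y z hxy hxz hyz => ?_⟩
    obtain ⟨w, hw⟩ := GenQuadrangle.exists_mem_perp_inter hcentric hxy hxz
    refine ⟨w, hw, fun w' hw' => by_contra fun hne => hyz ?_⟩
    exact GenQuadrangle.perp_eq_of_two_mem_perp_inter hx hxy hxz hw' hw hne
end
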